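/- Every magic labelling α ∈ N^12 of the cube can be written as α = q1α1 + q2α2 + q3α3 + q4α4 + q5α5 + q6α6 with q1, q2, q3, q6 ∈ N and q4, q5 ∈ Z, and this representation is unique. -/

import Mathlib

/-!
Coordinatewise, `∑ qᵢ αᵢ` has labels `x₃ = q₁`, `x₇ = q₂`, `x₁₂ = q₃`, `x₉ = q₆` (each of these
edges lies in the support of a single `αᵢ`), `x₂ = q₁ + q₄` and `x₁ = q₂ + q₃ + q₅`, so these six
labels force the coefficients. Conversely, the vertex equations express the other six labels of a
magic labelling through these six exactly as `∑ qᵢ αᵢ` does. Labels are numbered from 1 as in the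
paper, whereas `Fin 12` counts from 0.
-/

def IsMagic (x : Fin 12 → ℕ) (r : ℕ) : Prop :=
  x 0 + x 1 + x 8 = r ∧ x 0 + x 2 + x 9 = r ∧
  x 1 + x 3 + x 11 = r ∧ x 2 + x 3 + x 10 = r ∧
  x 4 + x 5 + x 8 = r ∧ x 4 + x 6 + x 9 = r ∧
  x 5 + x 7 + x 11 = r ∧ x 6 + x 7 + x 10 = r

def a1 : Fin 12 → ℤ := ![0,1,1,0,1,0,0,1,0,0,0,0]
def a2 : Fin 12 → ℤ := ![1,0,0,1,0,1,1,0,0,0,0,0]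
def a3 : Fin 12 → ℤ := ![1,0,0,0,1,0,0,0,0,0,1,1]
def a4 : Fin 12 → ℤ := ![0,1,0,0,0,1,0,0,0,1,1,0]
def a5 : Fin 12 → ℤ := ![1,0,0,1,1,0,0,1,0,0,0,0]
def a6 : Fin 12 → ℤ := ![0,0,0,1,0,0,0,1,1,1,0,0]

theorem sum_smul_a_eq (q₁ q₂ q₃ q₄ q₅ q₆ : ℤ) :
    q₁ • a1 + q₂ • a2 + q₃ • a3 + q₄ • a4 + q₅ • a5 + q₆ • a6 =
      ![q₂ + q₃ + q₅, q₁ + q₄, q₁, q₂ + q₅ + q₆, q₁ + q₃ + q₅, q₂ + q₄, q₂, q₁ + q₅ + q₆,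
        q₆, q₄ + q₆, q₃ + q₄, q₃] := by
  funext i
  fin_cases i <;> simp [a1, a2, a3, a4, a5, a6]

theorem coeffs_of_eq_sum_smul {y : Fin 12 → ℤ} {q₁ q₂ q₃ q₄ q₅ q₆ : ℤ}
    (hy : y = q₁ • a1 + q₂ • a2 + q₃ • a3 + q₄ • a4 + q₅ • a5 + q₆ • a6) :
    q₁ = y 2 ∧ q₂ = y 6 ∧ q₃ = y 11 ∧ q₄ = y 1 - y 2 ∧ q₅ = y 0 - y 6 - y 11 ∧ q₆ = y 8 := by
  subst hy
  rw [sum_smul_a_eq]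
  refine ⟨rfl, rfl, rfl, (add_sub_cancel_left q₁ q₄).symm, ?_, rfl⟩
  show q₅ = q₂ + q₃ + q₅ - q₂ - q₃
  ring

theorem IsMagic.eq_sum_smul {x : Fin 12 → ℕ} {r : ℕ} (h : IsMagic x r) :
    (fun i => (x i : ℤ)) =
      (x 2 : ℤ) • a1 + (x 6 : ℤ) • a2 + (x 11 : ℤ) • a3 + ((x 1 : ℤ) - x 2) • a4 +
        ((x 0 : ℤ) - x 6 - x 11) • a5 + (x 8 : ℤ) • a6 := by
  obtain ⟨h₁, h₂, h₃, h₄, h₅, h₆, h₇, h₈⟩ := h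
  rw [sum_smul_a_eq]
  funext i
  fin_cases i <;> dsimp <;> omega

theorem magic_unique_representation (x : Fin 12 → ℕ) (r : ℕ) (h : IsMagic x r) :
    ∃! q : ℕ × ℕ × ℕ × ℤ × ℤ × ℕ,
      (fun i => (x i : ℤ)) =
        (q.1 : ℤ) • a1 + (q.2.1 : ℤ) • a2 + (q.2.2.1 : ℤ) • a3 +
        q.2.2.2.1 • a4 + q.2.2.2.2.1 • a5 + (q.2.2.2.2.2 : ℤ) • a6 := by
  refine ⟨(x 2, x 6, x 11, (x 1 : ℤ) - x 2, (x 0 : ℤ) - x 6 - x 11, x 8), h.eq_sum_smul, ?_⟩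
  rintro ⟨q₁, q₂, q₃, q₄, q₅, q₆⟩ hq
  dsimp only at hq
  obtain ⟨h₁, h₂, h₃, h₄, h₅, h₆⟩ := coeffs_of_eq_sum_smul hq
  simp only [Prod.mk.injEq]
  omega
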